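/- Let N ≥ 2 be an integer and let z = r·e^{iφ} ∈ ℂ with 1 − 1/N ≤ r ≤ 1 and |φ| ≤ 1/√N. Then Re(−(1−z)²/(1+z)) ≤ 4/N. -/

import Mathlib

/-!
Writing `z = x + iy`, one has `(1 - z)(1 + z̄) = (1 - |z|²) - 2iy`, so that
`Re(-(1-z)²/(1+z)) = (2y² - (1 - |z|²)(1 - x)) / |1 + z|²`.
For `|z| ≤ 1` and `x ≥ 0` the subtracted term is nonnegative and `|1 + z|² ≥ 1`, hence the real
part is at most `2y² = 2r² sin² φ ≤ 2φ² ≤ 2/N`.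
-/

open Real

namespace Complex

theorem re_neg_one_sub_sq_div_one_add (z : ℂ) :
    (-((1 - z) ^ 2 / (1 + z))).re
      = (2 * z.im ^ 2 - (1 - normSq z) * (1 - z.re)) / normSq (1 + z) := by
  rw [← neg_div, div_re, ← add_div]
  congr 1
  simp only [normSq_apply, neg_re, neg_im, sq, mul_re, mul_im, sub_re, sub_im, add_re, add_im,
    one_re, one_im]
  ring

theorem re_neg_one_sub_sq_div_one_add_le_two_mul_im_sq {z : ℂ} (hre : 0 ≤ z.re)
    (hnorm : ‖z‖ ≤ 1) : (-((1 - z) ^ 2 / (1 + z))).re ≤ 2 * z.im ^ 2 := by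
  have hnormSq : normSq z ≤ 1 := by rw [normSq_eq_norm_sq]; nlinarith [norm_nonneg z]
  have hre_le : z.re ≤ 1 := (re_le_norm z).trans hnorm
  have hden : 1 ≤ normSq (1 + z) := by
    simp only [normSq_apply, add_re, add_im, one_re, one_im]
    nlinarith [sq_nonneg z.im]
  rw [re_neg_one_sub_sq_div_one_add, div_le_iff₀ (by linarith)]
  nlinarith [mul_nonneg (sub_nonneg.2 hnormSq) (sub_nonneg.2 hre_le), sq_nonneg z.im]

end Complex

theorem sq_le_one_div_of_abs_le_one_div_sqrt {a x : ℝ} (hx : 0 ≤ x) (ha : |a| ≤ 1 / √x) :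
    a ^ 2 ≤ 1 / x := by
  have := pow_le_pow_left₀ (abs_nonneg a) ha 2
  rwa [sq_abs, div_pow, one_pow, sq_sqrt hx] at this

theorem re_neg_one_sub_sq_div_one_add_le_general
    (N : ℕ) (r φ : ℝ)
    (hr₁ : 1 - 1 / (N : ℝ) ≤ r) (hr₂ : r ≤ 1)
    (hφ : |φ| ≤ 1 / Real.sqrt N) :
    (-((1 - (r : ℂ) * Complex.exp (φ * Complex.I)) ^ 2 /
        (1 + (r : ℂ) * Complex.exp (φ * Complex.I)))).re ≤ 4 / (N : ℝ) := by
  have hN_inv : 1 / (N : ℝ) ≤ 1 := by simpa only [one_div] using Nat.cast_inv_le_one N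
  have hr : 0 ≤ r := by linarith
  have hφ_sq : φ ^ 2 ≤ 1 / N := sq_le_one_div_of_abs_le_one_div_sqrt N.cast_nonneg hφ
  have hφ_abs : |φ| ≤ 1 := (sq_le_one_iff_abs_le_one φ).1 (hφ_sq.trans hN_inv)
  have hcos : 0 ≤ cos φ := cos_nonneg_of_mem_Icc (abs_le.1 (hφ_abs.trans one_le_pi_div_two))
  set z : ℂ := r * Complex.exp (φ * Complex.I)
  have hz_re : z.re = r * cos φ := by simp [z, Complex.exp_ofReal_mul_I_re]
  have hz_im : z.im = r * sin φ := by simp [z, Complex.exp_ofReal_mul_I_im]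
  have hz_norm : ‖z‖ = r := by
    rw [norm_mul, Complex.norm_exp_ofReal_mul_I, Complex.norm_real, norm_of_nonneg hr, mul_one]
  calc (-((1 - z) ^ 2 / (1 + z))).re
      ≤ 2 * z.im ^ 2 :=
        Complex.re_neg_one_sub_sq_div_one_add_le_two_mul_im_sq (hz_re ▸ mul_nonneg hr hcos)
          (hz_norm ▸ hr₂)
    _ = 2 * (r ^ 2 * sin φ ^ 2) := by rw [hz_im, mul_pow]
    _ ≤ 2 * φ ^ 2 := by
        gcongr 2 * ?_
        exact (mul_le_of_le_one_left (sq_nonneg _) (pow_le_one₀ hr hr₂)).trans sin_sq_le_sq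
    _ ≤ 2 * (1 / N) := by gcongr
    _ ≤ 4 / N := by rw [mul_one_div]; gcongr; norm_num

/-- estimate (3.17) of the paper: for an integer `N ≥ 2` and
`z = r e^{iφ}` with `1 - 1/N ≤ r ≤ 1` and `|φ| ≤ 1/√N`, one has
`Re(-(1-z)²/(1+z)) ≤ 4/N`. -/
theorem re_neg_one_sub_sq_div_one_add_le
    (N : ℕ) (hN : 2 ≤ N) (r φ : ℝ)
    (hr₁ : 1 - 1 / (N : ℝ) ≤ r) (hr₂ : r ≤ 1)
    (hφ : |φ| ≤ 1 / Real.sqrt N) :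
    (-((1 - (r : ℂ) * Complex.exp (φ * Complex.I)) ^ 2 /
        (1 + (r : ℂ) * Complex.exp (φ * Complex.I)))).re ≤ 4 / (N : ℝ) :=
  re_neg_one_sub_sq_div_one_add_le_general N r φ hr₁ hr₂ hφ
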